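/- Let A be a finite collection of vectors in C^N with Σ_{γ∈A}(γ,u)(γ,v) = (u,v) for all u,v, and λ a scalar, and define H₁ = −Δ + (λ/2)Σ_{γ∈A} (γ,γ)²/(γ,x)² + (λ²/4)Σ_{γ,β∈A} (γ,γ)(β,β)(γ,β)/((γ,x)(β,x)) and H₂ = −Δ + λ Σ_{γ∈A} ((γ,γ)/(γ,x)) ∂_γ. Then with δ(x) = Π_{β∈A} (β,x)^{(λ/2)(β,β)}, one has δ^{−1} ∘ H₂ ∘ δ = H₁ as differential operators on the complement of the hyperplanes. -/

import Mathlib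

open Finset Real

noncomputable def dotp {N : ℕ} (u v : Fin N → ℝ) : ℝ := ∑ i, u i * v i

noncomputable def pderiv {N : ℕ} (i : Fin N) (f : (Fin N → ℝ) → ℝ) :
    (Fin N → ℝ) → ℝ :=
  fun x => fderiv ℝ f x (Pi.single i 1)

noncomputable def lap {N : ℕ} (f : (Fin N → ℝ) → ℝ) : (Fin N → ℝ) → ℝ :=
  fun x => ∑ i, pderiv i (pderiv i f) x

/-- `H₁ = −Δ + (λ/2)Σ_γ (γ,γ)²/(γ,x)² + (λ²/4)Σ_{γ,β}(γ,γ)(β,β)(γ,β)/((γ,x)(β,x))`. -/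
noncomputable def H1v {N : ℕ} (A : Finset (Fin N → ℝ)) (lam : ℝ)
    (f : (Fin N → ℝ) → ℝ) (x : Fin N → ℝ) : ℝ :=
  -(lap f x) +
    ((lam / 2) * ∑ γ ∈ A, (dotp γ γ) ^ 2 / (dotp γ x) ^ 2 +
      (lam ^ 2 / 4) * ∑ γ ∈ A, ∑ β ∈ A,
        dotp γ γ * dotp β β * dotp γ β / (dotp γ x * dotp β x)) * f x

/-- `H₂ = −Δ + λ Σ_γ ((γ,γ)/(γ,x)) ∂_γ`. -/
noncomputable def H2v {N : ℕ} (A : Finset (Fin N → ℝ)) (lam : ℝ)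
    (f : (Fin N → ℝ) → ℝ) (x : Fin N → ℝ) : ℝ :=
  -(lap f x) + ∑ γ ∈ A, (lam * dotp γ γ / dotp γ x) * (∑ i, γ i * pderiv i f x)

/-- Gauge factor `δ(x) = Π_{β∈A} (β,x)^{(λ/2)(β,β)}`. -/
noncomputable def gaugeδv {N : ℕ} (A : Finset (Fin N → ℝ)) (lam : ℝ)
    (x : Fin N → ℝ) : ℝ :=
  ∏ β ∈ A, Real.rpow (dotp β x) (lam / 2 * dotp β β)

noncomputable def Lm {N : ℕ} (β : Fin N → ℝ) : (Fin N → ℝ) →L[ℝ] ℝ :=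
  ∑ i, β i • ContinuousLinearMap.proj i

lemma Lm_apply {N : ℕ} (β v : Fin N → ℝ) : Lm β v = dotp β v := by
  simp [Lm, dotp]

lemma dotp_single {N : ℕ} (β : Fin N → ℝ) (i : Fin N) :
    dotp β (Pi.single i 1) = β i := by
  simp [dotp, Pi.single_apply, mul_comm]

lemma hasFDerivAt_dotp {N : ℕ} (β y : Fin N → ℝ) :
    HasFDerivAt (fun z => dotp β z) (Lm β) y := by
  have : (fun z : Fin N → ℝ => dotp β z) = fun z => Lm β z := by
    funext z; rw [Lm_apply]
  rw [this]
  exact (Lm β).hasFDerivAt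

lemma gaugeδv_pos {N : ℕ} (A : Finset (Fin N → ℝ)) (lam : ℝ) {y : Fin N → ℝ}
    (hy : ∀ β ∈ A, 0 < dotp β y) : 0 < gaugeδv A lam y :=
  Finset.prod_pos fun β hβ => Real.rpow_pos_of_pos (hy β hβ) _

lemma hasFDerivAt_gauge {N : ℕ} [DecidableEq (Fin N → ℝ)]
    (A : Finset (Fin N → ℝ)) (lam : ℝ) {y : Fin N → ℝ}
    (hy : ∀ β ∈ A, 0 < dotp β y) :
    HasFDerivAt (gaugeδv A lam)
      (∑ β ∈ A, (gaugeδv A lam y * (lam / 2 * dotp β β) / dotp β y) • Lm β) y := by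
  have h1 : ∀ β ∈ A, HasFDerivAt (fun z => Real.rpow (dotp β z) (lam / 2 * dotp β β))
      (((lam / 2 * dotp β β) * (dotp β y) ^ (lam / 2 * dotp β β - 1)) • Lm β) y := by
    intro β hβ
    exact (Real.hasDerivAt_rpow_const (Or.inl (hy β hβ).ne')).comp_hasFDerivAt y
      (hasFDerivAt_dotp β y)
  have h2 := HasFDerivAt.finset_prod h1
  refine h2.congr_fderiv (Eq.symm ?_)
  refine Finset.sum_congr rfl fun β hβ => ?_
  rw [smul_smul]
  congr 1
  simp only [Real.rpow_eq_pow] at *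
  rw [Real.rpow_sub_one (hy β hβ).ne']
  have hprod : (∏ j ∈ A.erase β, dotp j y ^ (lam / 2 * dotp j j))
      * dotp β y ^ (lam / 2 * dotp β β) = gaugeδv A lam y :=
    Finset.prod_erase_mul A _ hβ
  rw [← hprod]
  ring

lemma HasFDerivAt.pderiv_eq {N : ℕ} {f : (Fin N → ℝ) → ℝ} {L : (Fin N → ℝ) →L[ℝ] ℝ}
    {y : Fin N → ℝ} (h : HasFDerivAt f L y) (i : Fin N) :
    pderiv i f y = L (Pi.single i 1) := by
  rw [pderiv, h.fderiv]

/-- first-derivative gauge product rule -/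

lemma pderiv_gauge_mul {N : ℕ} [DecidableEq (Fin N → ℝ)]
    (A : Finset (Fin N → ℝ)) (lam : ℝ) {y : Fin N → ℝ}
    (hy : ∀ β ∈ A, 0 < dotp β y) {g : (Fin N → ℝ) → ℝ} {g' : (Fin N → ℝ) →L[ℝ] ℝ}
    (hg : HasFDerivAt g g' y) (i : Fin N) :
    pderiv i (fun z => gaugeδv A lam z * g z) y
      = gaugeδv A lam y *
          (g' (Pi.single i 1) + (∑ β ∈ A, lam / 2 * dotp β β * β i / dotp β y) * g y) := by
  have h := ((hasFDerivAt_gauge A lam hy).fun_mul hg).pderiv_eq i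
  rw [h]
  simp only [ContinuousLinearMap.add_apply, ContinuousLinearMap.smul_apply,
    ContinuousLinearMap.coe_sum', Finset.sum_apply, Lm_apply, dotp_single,
    smul_eq_mul]
  rw [mul_add]
  congr 1
  rw [Finset.mul_sum, Finset.sum_mul, Finset.mul_sum]
  exact Finset.sum_congr rfl fun β _ => by ring

lemma contDiff_pderiv {N : ℕ} {f : (Fin N → ℝ) → ℝ} (hf : ContDiff ℝ (⊤ : ℕ∞) f) (i : Fin N) :
    ContDiff ℝ (⊤ : ℕ∞) (pderiv i f) := by
  have h : ContDiff ℝ (⊤ : ℕ∞) (fderiv ℝ f) := hf.fderiv_right (by simp)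
  exact h.clm_apply contDiff_const

lemma hasFDerivAt_G {N : ℕ} [DecidableEq (Fin N → ℝ)]
    (A : Finset (Fin N → ℝ)) (lam : ℝ) (i : Fin N) {y : Fin N → ℝ}
    (hy : ∀ β ∈ A, 0 < dotp β y) :
    HasFDerivAt (fun z => ∑ β ∈ A, lam / 2 * dotp β β * β i / dotp β z)
      (∑ β ∈ A, (-(lam / 2 * dotp β β * β i) / (dotp β y) ^ 2) • Lm β) y := by
  refine HasFDerivAt.fun_sum fun β hβ => ?_
  have h1 : HasFDerivAt (fun z => (dotp β z)⁻¹) ((-((dotp β y) ^ 2)⁻¹) • Lm β) y :=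
    (hasDerivAt_inv (hy β hβ).ne').comp_hasFDerivAt y (hasFDerivAt_dotp β y)
  have h2 := h1.const_mul (lam / 2 * dotp β β * β i)
  have : (fun z => lam / 2 * dotp β β * β i * (dotp β z)⁻¹)
      = fun z => lam / 2 * dotp β β * β i / dotp β z := by
    funext z; ring
  rw [this] at h2
  refine h2.congr_fderiv (Eq.symm ?_)
  rw [smul_smul]
  congr 1
  field_simp

lemma isOpen_U {N : ℕ} (A : Finset (Fin N → ℝ)) :
    IsOpen {y : Fin N → ℝ | ∀ β ∈ A, 0 < dotp β y} := by
  have : {y : Fin N → ℝ | ∀ β ∈ A, 0 < dotp β y}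
      = ⋂ β ∈ A, {y | 0 < dotp β y} := by
    ext y; simp
  rw [this]
  refine isOpen_biInter_finset fun β _ => ?_
  have hc : Continuous (fun y : Fin N → ℝ => dotp β y) := by
    have : (fun y : Fin N → ℝ => dotp β y) = fun y => Lm β y := by
      funext z; rw [Lm_apply]
    rw [this]; exact (Lm β).continuous
  exact isOpen_lt continuous_const hc

lemma pderiv2_gauge {N : ℕ} [DecidableEq (Fin N → ℝ)]
    (A : Finset (Fin N → ℝ)) (lam : ℝ) {f : (Fin N → ℝ) → ℝ}
    (hf : ContDiff ℝ (⊤ : ℕ∞) f) {x : Fin N → ℝ} (hx : ∀ β ∈ A, 0 < dotp β x) (i : Fin N) :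
    pderiv i (pderiv i (fun z => gaugeδv A lam z * f z)) x
      = gaugeδv A lam x * (pderiv i (pderiv i f) x
          + (∑ β ∈ A, -(lam / 2 * dotp β β * β i) / (dotp β x) ^ 2 * β i) * f x
          + 2 * (∑ β ∈ A, lam / 2 * dotp β β * β i / dotp β x) * pderiv i f x
          + (∑ β ∈ A, lam / 2 * dotp β β * β i / dotp β x)
            * (∑ β ∈ A, lam / 2 * dotp β β * β i / dotp β x) * f x) := by
  have hfd : Differentiable ℝ f := hf.differentiable (by simp)
  have hEq : pderiv i (fun z => gaugeδv A lam z * f z)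
      =ᶠ[nhds x] fun z => gaugeδv A lam z *
        (pderiv i f z + (∑ β ∈ A, lam / 2 * dotp β β * β i / dotp β z) * f z) := by
    filter_upwards [(isOpen_U A).mem_nhds hx] with y hy
    exact pderiv_gauge_mul A lam hy (hfd y).hasFDerivAt i
  have step1 : pderiv i (pderiv i (fun z => gaugeδv A lam z * f z)) x
      = pderiv i (fun z => gaugeδv A lam z *
          (pderiv i f z + (∑ β ∈ A, lam / 2 * dotp β β * β i / dotp β z) * f z)) x :=
    congrArg (fun L : (Fin N → ℝ) →L[ℝ] ℝ => L (Pi.single i 1)) hEq.fderiv_eq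
  rw [step1]
  have hg : HasFDerivAt
      (fun z => pderiv i f z + (∑ β ∈ A, lam / 2 * dotp β β * β i / dotp β z) * f z)
      (fderiv ℝ (pderiv i f) x +
        ((∑ β ∈ A, lam / 2 * dotp β β * β i / dotp β x) • fderiv ℝ f x +
          f x • (∑ β ∈ A, (-(lam / 2 * dotp β β * β i) / (dotp β x) ^ 2) • Lm β))) x :=
    (((contDiff_pderiv hf i).differentiable (by simp) x).hasFDerivAt).add
      ((hasFDerivAt_G A lam i hx).mul (hfd x).hasFDerivAt)
  rw [pderiv_gauge_mul A lam hx hg i]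
  simp only [ContinuousLinearMap.add_apply, ContinuousLinearMap.smul_apply,
    ContinuousLinearMap.coe_sum', Finset.sum_apply, Lm_apply, dotp_single,
    smul_eq_mul]
  have e1 : (fderiv ℝ (pderiv i f) x) (Pi.single i 1) = pderiv i (pderiv i f) x := rfl
  have e2 : (fderiv ℝ f x) (Pi.single i 1) = pderiv i f x := rfl
  rw [e1, e2]
  ring

lemma sum_swap_aux {N : ℕ} (A : Finset (Fin N → ℝ)) (lam : ℝ) (x : Fin N → ℝ)
    (P : Fin N → ℝ) :
    ∑ i, (∑ β ∈ A, lam / 2 * dotp β β * β i / dotp β x) * P i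
      = ∑ β ∈ A, lam / 2 * dotp β β / dotp β x * ∑ i, β i * P i := by
  calc ∑ i, (∑ β ∈ A, lam / 2 * dotp β β * β i / dotp β x) * P i
      = ∑ i, ∑ β ∈ A, lam / 2 * dotp β β * β i / dotp β x * P i :=
        Finset.sum_congr rfl fun i _ => Finset.sum_mul _ _ _
    _ = ∑ β ∈ A, ∑ i, lam / 2 * dotp β β * β i / dotp β x * P i := Finset.sum_comm
    _ = ∑ β ∈ A, lam / 2 * dotp β β / dotp β x * ∑ i, β i * P i := by
        refine Finset.sum_congr rfl fun β _ => ?_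
        rw [Finset.mul_sum]
        exact Finset.sum_congr rfl fun i _ => by ring

lemma sum_mul_self' {N : ℕ} (β : Fin N → ℝ) (a d : ℝ) :
    ∑ i, -(a * β i) / d * β i = -(a / d) * dotp β β := by
  rw [dotp, Finset.mul_sum]
  exact Finset.sum_congr rfl fun i _ => by ring

lemma sum_bilin {N : ℕ} (γ β : Fin N → ℝ) (a b c d : ℝ) :
    ∑ i, a * γ i / c * (b * β i / d) = a * b / (c * d) * dotp γ β := by
  rw [dotp, Finset.mul_sum]
  exact Finset.sum_congr rfl fun i _ => by ring

lemma sum_dot3 {N : ℕ} (β γ : Fin N → ℝ) (a c fx : ℝ) :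
    ∑ i, a * β i / c * (γ i * fx) = a / c * dotp γ β * fx := by
  rw [dotp, mul_comm (a / c * ∑ i, γ i * β i) fx, Finset.mul_sum, Finset.mul_sum]
  exact Finset.sum_congr rfl fun i _ => by ring

lemma final_alg {N : ℕ} (A : Finset (Fin N → ℝ)) (lam fx : ℝ) (x : Fin N → ℝ)
    (P Pii : Fin N → ℝ) :
    -(∑ i, (Pii i + (∑ β ∈ A, -(lam / 2 * dotp β β * β i) / (dotp β x) ^ 2 * β i) * fx
        + 2 * (∑ β ∈ A, lam / 2 * dotp β β * β i / dotp β x) * P i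
        + (∑ β ∈ A, lam / 2 * dotp β β * β i / dotp β x)
          * (∑ β ∈ A, lam / 2 * dotp β β * β i / dotp β x) * fx))
      + ∑ γ ∈ A, lam * dotp γ γ / dotp γ x
          * ∑ i, γ i * (P i + (∑ β ∈ A, lam / 2 * dotp β β * β i / dotp β x) * fx)
      = -(∑ i, Pii i) +
          ((lam / 2) * ∑ γ ∈ A, (dotp γ γ) ^ 2 / (dotp γ x) ^ 2 +
            (lam ^ 2 / 4) * ∑ γ ∈ A, ∑ β ∈ A,
              dotp γ γ * dotp β β * dotp γ β / (dotp γ x * dotp β x)) * fx := by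
  -- I1 : second-derivative of gauge log term
  have hI1 : ∑ i, (∑ β ∈ A, -(lam / 2 * dotp β β * β i) / (dotp β x) ^ 2 * β i) * fx
      = -((lam / 2) * ∑ γ ∈ A, (dotp γ γ) ^ 2 / (dotp γ x) ^ 2) * fx := by
    rw [← Finset.sum_mul]
    congr 1
    calc ∑ i, ∑ β ∈ A, -(lam / 2 * dotp β β * β i) / (dotp β x) ^ 2 * β i
        = ∑ β ∈ A, ∑ i, -(lam / 2 * dotp β β * β i) / (dotp β x) ^ 2 * β i :=
          Finset.sum_comm
      _ = ∑ β ∈ A, -(lam / 2 * dotp β β / (dotp β x) ^ 2) * dotp β β :=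
          Finset.sum_congr rfl fun β _ =>
            sum_mul_self' β (lam / 2 * dotp β β) ((dotp β x) ^ 2)
      _ = -((lam / 2) * ∑ γ ∈ A, (dotp γ γ) ^ 2 / (dotp γ x) ^ 2) := by
          rw [Finset.mul_sum, ← Finset.sum_neg_distrib]
          exact Finset.sum_congr rfl fun β _ => by ring
  -- I2 : cross term
  have hI2 : ∑ i, 2 * (∑ β ∈ A, lam / 2 * dotp β β * β i / dotp β x) * P i
      = ∑ γ ∈ A, lam * dotp γ γ / dotp γ x * ∑ i, γ i * P i := by
    calc ∑ i, 2 * (∑ β ∈ A, lam / 2 * dotp β β * β i / dotp β x) * P i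
        = 2 * ∑ i, (∑ β ∈ A, lam / 2 * dotp β β * β i / dotp β x) * P i := by
          rw [Finset.mul_sum]; exact Finset.sum_congr rfl fun i _ => by ring
      _ = 2 * ∑ β ∈ A, lam / 2 * dotp β β / dotp β x * ∑ i, β i * P i := by
          rw [sum_swap_aux]
      _ = ∑ γ ∈ A, lam * dotp γ γ / dotp γ x * ∑ i, γ i * P i := by
          rw [Finset.mul_sum]; exact Finset.sum_congr rfl fun γ _ => by ring
  -- I3 : square of gauge log derivative
  have hI3 : ∑ i, (∑ β ∈ A, lam / 2 * dotp β β * β i / dotp β x)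
        * (∑ β ∈ A, lam / 2 * dotp β β * β i / dotp β x) * fx
      = (∑ γ ∈ A, ∑ β ∈ A, lam ^ 2 / 4 * (dotp γ γ * dotp β β * dotp γ β
          / (dotp γ x * dotp β x))) * fx := by
    rw [← Finset.sum_mul]
    congr 1
    calc ∑ i, (∑ β ∈ A, lam / 2 * dotp β β * β i / dotp β x)
          * (∑ β ∈ A, lam / 2 * dotp β β * β i / dotp β x)
        = ∑ i, ∑ γ ∈ A, ∑ β ∈ A, (lam / 2 * dotp γ γ * γ i / dotp γ x)
            * (lam / 2 * dotp β β * β i / dotp β x) := by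
          refine Finset.sum_congr rfl fun i _ => ?_
          rw [Finset.sum_mul_sum]
      _ = ∑ γ ∈ A, ∑ i, ∑ β ∈ A, (lam / 2 * dotp γ γ * γ i / dotp γ x)
            * (lam / 2 * dotp β β * β i / dotp β x) := Finset.sum_comm
      _ = ∑ γ ∈ A, ∑ β ∈ A, ∑ i, (lam / 2 * dotp γ γ * γ i / dotp γ x)
            * (lam / 2 * dotp β β * β i / dotp β x) :=
          Finset.sum_congr rfl fun γ _ => Finset.sum_comm
      _ = ∑ γ ∈ A, ∑ β ∈ A, lam ^ 2 / 4 * (dotp γ γ * dotp β β * dotp γ β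
            / (dotp γ x * dotp β x)) := by
          refine Finset.sum_congr rfl fun γ _ => Finset.sum_congr rfl fun β _ => ?_
          rw [sum_bilin γ β (lam / 2 * dotp γ γ) (lam / 2 * dotp β β) (dotp γ x) (dotp β x)]
          ring
  -- I4 : drift times gauge log derivative
  have hI4 : ∑ γ ∈ A, lam * dotp γ γ / dotp γ x
        * ∑ i, γ i * ((∑ β ∈ A, lam / 2 * dotp β β * β i / dotp β x) * fx)
      = (∑ γ ∈ A, ∑ β ∈ A, lam ^ 2 / 2 * (dotp γ γ * dotp β β * dotp γ β
          / (dotp γ x * dotp β x))) * fx := by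
    rw [Finset.sum_mul]
    refine Finset.sum_congr rfl fun γ _ => ?_
    calc lam * dotp γ γ / dotp γ x
          * ∑ i, γ i * ((∑ β ∈ A, lam / 2 * dotp β β * β i / dotp β x) * fx)
        = lam * dotp γ γ / dotp γ x
            * ∑ i, ∑ β ∈ A, lam / 2 * dotp β β * β i / dotp β x * (γ i * fx) := by
          congr 1
          exact Finset.sum_congr rfl fun i _ => by
            rw [Finset.sum_mul, Finset.mul_sum]
            exact Finset.sum_congr rfl fun β _ => by ring
      _ = lam * dotp γ γ / dotp γ x
            * ∑ β ∈ A, ∑ i, lam / 2 * dotp β β * β i / dotp β x * (γ i * fx) := by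
          rw [Finset.sum_comm]
      _ = lam * dotp γ γ / dotp γ x
            * ∑ β ∈ A, lam / 2 * dotp β β / dotp β x * dotp γ β * fx := by
          congr 1
          refine Finset.sum_congr rfl fun β _ => ?_
          rw [sum_dot3 β γ (lam / 2 * dotp β β) (dotp β x) fx]
      _ = (∑ β ∈ A, lam ^ 2 / 2 * (dotp γ γ * dotp β β * dotp γ β
            / (dotp γ x * dotp β x))) * fx := by
          rw [Finset.sum_mul, Finset.mul_sum]
          exact Finset.sum_congr rfl fun β _ => by ring
  have hsplit : ∀ γ ∈ A, lam * dotp γ γ / dotp γ x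
      * ∑ i, γ i * (P i + (∑ β ∈ A, lam / 2 * dotp β β * β i / dotp β x) * fx)
      = lam * dotp γ γ / dotp γ x * ∑ i, γ i * P i
        + lam * dotp γ γ / dotp γ x
          * ∑ i, γ i * ((∑ β ∈ A, lam / 2 * dotp β β * β i / dotp β x) * fx) := by
    intro γ _
    rw [← mul_add, ← Finset.sum_add_distrib]
    congr 2
    exact funext fun i => by ring
  rw [Finset.sum_congr rfl hsplit, Finset.sum_add_distrib]
  simp only [Finset.sum_add_distrib]
  rw [hI1, hI2, hI3, hI4]
  have hS : (∑ γ ∈ A, ∑ β ∈ A, lam ^ 2 / 4 * (dotp γ γ * dotp β β * dotp γ β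
      / (dotp γ x * dotp β x)))
      = (lam ^ 2 / 4) * ∑ γ ∈ A, ∑ β ∈ A,
          dotp γ γ * dotp β β * dotp γ β / (dotp γ x * dotp β x) := by
    rw [Finset.mul_sum]
    exact Finset.sum_congr rfl fun γ _ => by rw [Finset.mul_sum]
  have hS2 : (∑ γ ∈ A, ∑ β ∈ A, lam ^ 2 / 2 * (dotp γ γ * dotp β β * dotp γ β
      / (dotp γ x * dotp β x)))
      = (lam ^ 2 / 2) * ∑ γ ∈ A, ∑ β ∈ A,
          dotp γ γ * dotp β β * dotp γ β / (dotp γ x * dotp β x) := by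
    rw [Finset.mul_sum]
    exact Finset.sum_congr rfl fun γ _ => by rw [Finset.mul_sum]
  rw [hS, hS2]
  ring

/-- For a finite collection `A` with normalized form `Σ_γ (γ,u)(γ,v) = (u,v)`, one
has the gauge relation `δ⁻¹ ∘ H₂ ∘ δ = H₁` away from the hyperplanes. -/
theorem stmt14 {N : ℕ} [DecidableEq (Fin N → ℝ)]
    (A : Finset (Fin N → ℝ)) (lam : ℝ)
    (hnorm : ∀ u v : Fin N → ℝ, ∑ γ ∈ A, dotp γ u * dotp γ v = dotp u v) :
    ∀ f : (Fin N → ℝ) → ℝ, ContDiff ℝ (⊤ : ℕ∞) f →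
      ∀ x : Fin N → ℝ, (∀ β ∈ A, 0 < dotp β x) →
        (gaugeδv A lam x)⁻¹ * H2v A lam (fun y => gaugeδv A lam y * f y) x
          = H1v A lam f x := by
  intro f hf x hx
  have hfd : Differentiable ℝ f := hf.differentiable (by simp)
  have hδne : gaugeδv A lam x ≠ 0 := (gaugeδv_pos A lam hx).ne'
  have h1 : ∀ i : Fin N, pderiv i (fun z => gaugeδv A lam z * f z) x
      = gaugeδv A lam x * (pderiv i f x
          + (∑ β ∈ A, lam / 2 * dotp β β * β i / dotp β x) * f x) :=
    fun i => pderiv_gauge_mul A lam hx (hfd x).hasFDerivAt i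
  have hlap : (∑ i, pderiv i (pderiv i fun z => gaugeδv A lam z * f z) x)
      = gaugeδv A lam x * ∑ i, (pderiv i (pderiv i f) x
          + (∑ β ∈ A, -(lam / 2 * dotp β β * β i) / (dotp β x) ^ 2 * β i) * f x
          + 2 * (∑ β ∈ A, lam / 2 * dotp β β * β i / dotp β x) * pderiv i f x
          + (∑ β ∈ A, lam / 2 * dotp β β * β i / dotp β x)
            * (∑ β ∈ A, lam / 2 * dotp β β * β i / dotp β x) * f x) := by
    rw [Finset.mul_sum]
    exact Finset.sum_congr rfl fun i _ => pderiv2_gauge A lam hf hx i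
  have hdrift : (∑ γ ∈ A, (lam * dotp γ γ / dotp γ x)
        * ∑ i, γ i * pderiv i (fun z => gaugeδv A lam z * f z) x)
      = gaugeδv A lam x * ∑ γ ∈ A, lam * dotp γ γ / dotp γ x
          * ∑ i, γ i * (pderiv i f x
              + (∑ β ∈ A, lam / 2 * dotp β β * β i / dotp β x) * f x) := by
    rw [Finset.mul_sum]
    refine Finset.sum_congr rfl fun γ _ => ?_
    have : (∑ i, γ i * pderiv i (fun z => gaugeδv A lam z * f z) x)
        = gaugeδv A lam x * ∑ i, γ i * (pderiv i f x
            + (∑ β ∈ A, lam / 2 * dotp β β * β i / dotp β x) * f x) := by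
      rw [Finset.mul_sum]
      exact Finset.sum_congr rfl fun i _ => by rw [h1 i]; ring
    rw [this]; ring
  rw [H2v, H1v, lap, lap, hlap, hdrift]
  rw [show -(gaugeδv A lam x * ∑ i, (pderiv i (pderiv i f) x
          + (∑ β ∈ A, -(lam / 2 * dotp β β * β i) / (dotp β x) ^ 2 * β i) * f x
          + 2 * (∑ β ∈ A, lam / 2 * dotp β β * β i / dotp β x) * pderiv i f x
          + (∑ β ∈ A, lam / 2 * dotp β β * β i / dotp β x)
            * (∑ β ∈ A, lam / 2 * dotp β β * β i / dotp β x) * f x))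
      + gaugeδv A lam x * ∑ γ ∈ A, lam * dotp γ γ / dotp γ x
          * ∑ i, γ i * (pderiv i f x
              + (∑ β ∈ A, lam / 2 * dotp β β * β i / dotp β x) * f x)
      = gaugeδv A lam x * (-(∑ i, (pderiv i (pderiv i f) x
          + (∑ β ∈ A, -(lam / 2 * dotp β β * β i) / (dotp β x) ^ 2 * β i) * f x
          + 2 * (∑ β ∈ A, lam / 2 * dotp β β * β i / dotp β x) * pderiv i f x
          + (∑ β ∈ A, lam / 2 * dotp β β * β i / dotp β x)
            * (∑ β ∈ A, lam / 2 * dotp β β * β i / dotp β x) * f x))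
        + ∑ γ ∈ A, lam * dotp γ γ / dotp γ x
          * ∑ i, γ i * (pderiv i f x
              + (∑ β ∈ A, lam / 2 * dotp β β * β i / dotp β x) * f x)) from by ring,
    inv_mul_cancel_left₀ hδne]
  exact final_alg A lam (f x) x (fun i => pderiv i f x) (fun i => pderiv i (pderiv i f) x)
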